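/- Let S, M, A be finite nonempty types and γ ∈ [0,1). For any two adversaries f g : S → M, the optimal expected discounted returns of the augmented Cheap Talk MDPs determined by f and g are equal. -/

import Mathlib

/-! Since the message component of the augmented state is always `f s`, the augmented chain
stays on the graph of `f`, where it is a copy of the base chain. A policy `π̄` on the
augmented MDP therefore earns exactly the return of its restriction `s ↦ π̄ (s, f s)` to that
graph, and every base policy arises this way from `(s, m) ↦ π s`. So the achievable returns
of every augmented MDP are those of the base MDP, whatever the adversary. -/

/-- State distribution at time `t` induced by policy `π` from initial distribution `μ`. -/
def stateDist {S A : Type} [Fintype S] [Fintype A]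
    (P : S → A → S → ℝ) (μ : S → ℝ) (π : S → A → ℝ) : ℕ → S → ℝ
  | 0 => μ
  | (t + 1) => fun s' => ∑ s, stateDist P μ π t s * ∑ a, π s a * P s a s'

/-- Expected discounted return `E[Σ_t γ^t r_t]` of policy `π`. -/
noncomputable def expReturn {S A : Type} [Fintype S] [Fintype A]
    (γ : ℝ) (P : S → A → S → ℝ) (μ : S → ℝ) (π : S → A → ℝ) (R : S → A → ℝ) : ℝ :=
  ∑' t : ℕ, γ ^ t * ∑ s, stateDist P μ π t s * ∑ a, π s a * R s a

/-- A stochastic policy: nonnegative and summing to one in each state. -/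
def IsPolicy {S A : Type} [Fintype A] (π : S → A → ℝ) : Prop :=
  (∀ s a, 0 ≤ π s a) ∧ ∀ s, ∑ a, π s a = 1

/-- Augmented Cheap Talk kernel `P̄((s',m')|(s,m),a) = P(s'|s,a)·[m' = f s']`. -/
def augKernel {S M A : Type} [DecidableEq M] (P : S → A → S → ℝ) (f : S → M) :
    S × M → A → S × M → ℝ :=
  fun p a q => if q.2 = f q.1 then P p.1 a q.1 else 0

/-- Augmented initial distribution `μ̄(s,m) = μ(s)·[m = f s]`. -/
def augInit {S M : Type} [DecidableEq M] (μ : S → ℝ) (f : S → M) : S × M → ℝ :=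
  fun p => if p.2 = f p.1 then μ p.1 else 0

/-- Augmented reward `R̄((s,m),a) = R(s,a)`. -/
def augReward {S M A : Type} (R : S → A → ℝ) : S × M → A → ℝ :=
  fun p a => R p.1 a

theorem IsPolicy.comp {S T A : Type} [Fintype A] {π : S → A → ℝ} (hπ : IsPolicy π)
    (h : T → S) : IsPolicy (π ∘ h) :=
  ⟨fun t => hπ.1 (h t), fun t => hπ.2 (h t)⟩

section Augmented

variable {S M A : Type} [Fintype S] [Fintype M] [Fintype A] [DecidableEq M]

theorem stateDist_augKernel (P : S → A → S → ℝ) (μ : S → ℝ) (f : S → M)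
    (π : S × M → A → ℝ) (t : ℕ) (q : S × M) :
    stateDist (augKernel P f) (augInit μ f) π t q =
      if q.2 = f q.1 then stateDist P μ (fun s => π (s, f s)) t q.1 else 0 := by
  induction t generalizing q with
  | zero => rfl
  | succ t ih =>
    obtain ⟨s', m'⟩ := q
    simp only [stateDist, Fintype.sum_prod_type, ih, augKernel]
    by_cases h : m' = f s'
    · simp [h, ite_mul, Finset.mul_sum]
    · simp [h]

theorem expReturn_augKernel (γ : ℝ) (P : S → A → S → ℝ) (μ : S → ℝ) (R : S → A → ℝ)
    (f : S → M) (π : S × M → A → ℝ) :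
    expReturn γ (augKernel P f) (augInit μ f) π (augReward R) =
      expReturn γ P μ (fun s => π (s, f s)) R := by
  refine tsum_congr fun t => congrArg (γ ^ t * ·) ?_
  simp [Fintype.sum_prod_type, stateDist_augKernel, augReward, ite_mul]

theorem augmented_returns_eq_base_returns (γ : ℝ) (P : S → A → S → ℝ) (μ : S → ℝ)
    (R : S → A → ℝ) (f : S → M) :
    {x : ℝ | ∃ π : S × M → A → ℝ, IsPolicy π ∧
        x = expReturn γ (augKernel P f) (augInit μ f) π (augReward R)} =
      {x : ℝ | ∃ π : S → A → ℝ, IsPolicy π ∧ x = expReturn γ P μ π R} := by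
  ext x
  constructor
  · rintro ⟨π, hπ, rfl⟩
    exact ⟨_, hπ.comp fun s => (s, f s), expReturn_augKernel γ P μ R f π⟩
  · rintro ⟨π, hπ, rfl⟩
    exact ⟨_, hπ.comp Prod.fst, (expReturn_augKernel γ P μ R f (π ∘ Prod.fst)).symm⟩

end Augmented

theorem cheap_talk_optimal_return_independent_of_adversary_general
    {S M A : Type} [Fintype S] [Fintype M] [Fintype A]
    [DecidableEq M]
    (γ : ℝ)
    (P : S → A → S → ℝ)
    (μ : S → ℝ)
    (R : S → A → ℝ)
    (f g : S → M) :
    sSup {x : ℝ | ∃ πbar : S × M → A → ℝ, IsPolicy πbar ∧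
        x = expReturn γ (augKernel P f) (augInit μ f) πbar (augReward R)} =
      sSup {x : ℝ | ∃ πbar : S × M → A → ℝ, IsPolicy πbar ∧
        x = expReturn γ (augKernel P g) (augInit μ g) πbar (augReward R)} := by
  rw [augmented_returns_eq_base_returns, augmented_returns_eq_base_returns]

/-- Corollary of Proposition 2: for any two adversaries `f, g`, the optimal expected
discounted returns of the corresponding augmented Cheap Talk MDPs coincide. -/
theorem cheap_talk_optimal_return_independent_of_adversary
    {S M A : Type} [Fintype S] [Fintype M] [Fintype A]
    [Nonempty S] [Nonempty M] [Nonempty A] [DecidableEq M]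
    (γ : ℝ) (hγ0 : 0 ≤ γ) (hγ1 : γ < 1)
    (P : S → A → S → ℝ) (hPnn : ∀ s a s', 0 ≤ P s a s') (hP : ∀ s a, ∑ s', P s a s' = 1)
    (μ : S → ℝ) (hμnn : ∀ s, 0 ≤ μ s) (hμ : ∑ s, μ s = 1)
    (R : S → A → ℝ)
    (f g : S → M) :
    sSup {x : ℝ | ∃ πbar : S × M → A → ℝ, IsPolicy πbar ∧
        x = expReturn γ (augKernel P f) (augInit μ f) πbar (augReward R)} =
      sSup {x : ℝ | ∃ πbar : S × M → A → ℝ, IsPolicy πbar ∧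
        x = expReturn γ (augKernel P g) (augInit μ g) πbar (augReward R)} :=
  cheap_talk_optimal_return_independent_of_adversary_general γ P μ R f g
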